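/- Let ν be a valuation on K[x], let Q ∈ K[x] be an (abstract) key polynomial for ν, and let f ∈ K[x] be a non-constant polynomial with ε(f) < ε(Q). Then the initial term of f is a unit in the graded algebra of ν; concretely, there exists b ∈ K[x] with deg b < deg Q such that b·f ∼_ν 1. -/

import Mathlib

open Polynomial

namespace KeyPolPaper

variable {K : Type*} [Field K] {Λ : Type*} [AddCommGroup Λ] [LinearOrder Λ] [IsOrderedAddMonoid Λ]

/-- A valuation on `F[X]` with values in `Λ ∪ {∞}`: multiplicative, satisfies the
ultrametric inequality, and is finite on nonzero constants. -/
def IsValuation {F : Type*} [Field F] (w : F[X] → WithTop Λ) : Prop :=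
  w 0 = ⊤ ∧ (∀ f g : F[X], w (f * g) = w f + w g) ∧
    (∀ f g : F[X], min (w f) (w g) ≤ w (f + g)) ∧
    ∀ a : F, a ≠ 0 → w (C a) ≠ ⊤

/-- `μ ≤ ν` for valuations on `K[X]`. -/
def ValLE (μ ν : K[X] → WithTop Λ) : Prop := ∀ f : K[X], μ f ≤ ν f

/-- `μ < ν` for valuations on `K[X]`. -/
def ValLT (μ ν : K[X] → WithTop Λ) : Prop := ValLE μ ν ∧ μ ≠ ν

/-- ν-equivalence: `f ∼_ν g` iff `ν (f - g) > ν f`. -/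
def VEquiv (ν : K[X] → WithTop Λ) (f g : K[X]) : Prop := ν f < ν (f - g)

/-- ν-divisibility: `h ∣_ν g` iff `g ∼_ν q * h` for some `q`. -/
def VDvd (ν : K[X] → WithTop Λ) (h g : K[X]) : Prop := ∃ q : K[X], VEquiv ν g (q * h)

/-- MacLane–Vaquié key polynomial: monic, ν-minimal and ν-irreducible. -/
def IsMLVKey (ν : K[X] → WithTop Λ) (φ : K[X]) : Prop :=
  φ.Monic ∧ (∀ f : K[X], f ≠ 0 → f.natDegree < φ.natDegree → ¬ VDvd ν φ f) ∧
    ¬ VDvd ν φ 1 ∧ ∀ f g : K[X], VDvd ν φ (f * g) → VDvd ν φ f ∨ VDvd ν φ g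

/-- `e` is the value `ε(f) = max_{b ≥ 1} (ν f - ν (∂_b f)) / b`; phrased multiplicatively,
`e` satisfies `ν f ≤ ν (∂_b f) + b • e` for all `b ≥ 1`, with equality for some `b ≥ 1`.
If `ν f = ∞` then `ε(f) = ∞`. -/
def IsEps (ν : K[X] → WithTop Λ) (f : K[X]) (e : WithTop Λ) : Prop :=
  (ν f = ⊤ ∧ e = ⊤) ∨
    (ν f ≠ ⊤ ∧ (∀ b : ℕ, 1 ≤ b → ν f ≤ ν (hasseDeriv b f) + b • e) ∧
      ∃ b : ℕ, 1 ≤ b ∧ ν f = ν (hasseDeriv b f) + b • e)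

/-- The invariant `ε(f)`; well defined (for non-constant `f`) since `Λ` is divisible and
the defining property determines `e` uniquely. -/
noncomputable def eps (ν : K[X] → WithTop Λ) (f : K[X]) : WithTop Λ :=
  letI := Classical.propDecidable (∃ e : WithTop Λ, IsEps ν f e)
  if h : ∃ e : WithTop Λ, IsEps ν f e then h.choose else ⊤

/-- The set `I(f)` of indices `b ≥ 1` with `ν (∂_b f) = ν f - b • ε(f)`. -/
def epsAttain (ν : K[X] → WithTop Λ) (f : K[X]) : Set ℕ :=
  {b : ℕ | 1 ≤ b ∧ ν f = ν (hasseDeriv b f) + b • eps ν f}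

/-- Abstract key polynomial for `ν`. -/
def IsKeyPoly (ν : K[X] → WithTop Λ) (Q : K[X]) : Prop :=
  Q.Monic ∧ 0 < Q.natDegree ∧
    ∀ f : K[X], 0 < f.natDegree → f.natDegree < Q.natDegree → eps ν f < eps ν Q

/-- The `s`-th coefficient of the canonical `Q`-expansion `f = Σ_s a_s Q^s`,
`deg a_s < deg Q`. -/
noncomputable def qCoeff (Q f : K[X]) (s : ℕ) : K[X] := ((· /ₘ Q)^[s] f) %ₘ Q

/-- The truncation `ν_Q (f) = min_s ν (a_s Q^s)`. -/
noncomputable def trunc (ν : K[X] → WithTop Λ) (Q f : K[X]) : WithTop Λ :=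
  (Finset.range (f.natDegree + 1)).inf fun s => ν (qCoeff Q f s * Q ^ s)

/-- `S_{ν,Q}(f)`: the set of indices attaining the minimum in `ν_Q(f)`. -/
def attain (ν : K[X] → WithTop Λ) (Q f : K[X]) : Set ℕ :=
  {s : ℕ | ν (qCoeff Q f s * Q ^ s) = trunc ν Q f}

/-- The augmented valuation `[μ; φ, γ] (f) = min_s (μ (a_s) + s • γ)` on φ-expansions. -/
noncomputable def augVal (μ : K[X] → WithTop Λ) (φ : K[X]) (γ : WithTop Λ) (f : K[X]) :
    WithTop Λ :=
  (Finset.range (f.natDegree + 1)).inf fun s => μ (qCoeff φ f s) + s • γ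

/-- `Φ_{μ,ν}`: monic polynomials of minimal degree with `μ φ < ν φ`. -/
def PhiSet (μ ν : K[X] → WithTop Λ) : Set K[X] :=
  {φ : K[X] | φ.Monic ∧ μ φ < ν φ ∧
    ∀ ψ : K[X], ψ.Monic → μ ψ < ν ψ → φ.natDegree ≤ ψ.natDegree}

/-- `mult f`: the least `b ≥ 1` with `∂_b f ≠ 0`. -/
noncomputable def multOf (f : K[X]) : ℕ := sInf {b : ℕ | 1 ≤ b ∧ hasseDeriv b f ≠ 0}

/-- Abstract limit key polynomial for `ν` (conditions (K1)-(K4)). -/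
def IsLimitKeyPoly (ν : K[X] → WithTop Λ) (Q : K[X]) : Prop :=
  Q.Monic ∧
    ∃ Qm : K[X], IsKeyPoly ν Qm ∧ ValLT (trunc ν Qm) ν ∧
      (∃ χ ∈ PhiSet (trunc ν Qm) ν, Qm.natDegree = χ.natDegree) ∧
      (∀ χ ∈ PhiSet (trunc ν Qm) ν, ∃ χ' ∈ PhiSet (trunc ν Qm) ν, ν χ < ν χ') ∧
      (∀ χ ∈ PhiSet (trunc ν Qm) ν, trunc ν χ Q < ν Q) ∧
      ∀ Q' : K[X], Q'.Monic →
        (∀ χ ∈ PhiSet (trunc ν Qm) ν, trunc ν χ Q' < ν Q') → Q.natDegree ≤ Q'.natDegree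

/-- A continuous MacLane chain of stable degree `m`: valuations `ρ_0 < ρ_1 < ⋯`,
monic key polynomials `χ_i` (for `i ≥ 1`) of degree `m`, with
`ρ_i = [ρ_{i-1}; χ_i, β_i]`, `β_i = ρ_i (χ_i) > ρ_{i-1} (χ_i)` and
`χ_{i+1} ∤_{ρ_i} χ_i`. -/
structure MacLaneChain (K : Type*) [Field K] (Λ : Type*) [AddCommGroup Λ] [LinearOrder Λ] [IsOrderedAddMonoid Λ] where
  m : ℕ
  hm : 0 < m
  ρ : ℕ → K[X] → WithTop Λ
  χ : ℕ → K[X]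
  β : ℕ → Λ
  isVal : ∀ i : ℕ, IsValuation (ρ i)
  mono : ∀ i : ℕ, ValLT (ρ i) (ρ (i + 1))
  monicChi : ∀ i : ℕ, (χ (i + 1)).Monic
  degChi : ∀ i : ℕ, (χ (i + 1)).natDegree = m
  keyChi : ∀ i : ℕ, IsMLVKey (ρ i) (χ (i + 1))
  beta_def : ∀ i : ℕ, ρ (i + 1) (χ (i + 1)) = (β (i + 1) : WithTop Λ)
  beta_lt : ∀ i : ℕ, ρ i (χ (i + 1)) < (β (i + 1) : WithTop Λ)
  aug : ∀ i : ℕ, ρ (i + 1) = augVal (ρ i) (χ (i + 1)) (β (i + 1) : WithTop Λ)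
  not_dvd : ∀ i : ℕ, ¬ VDvd (ρ (i + 1)) (χ (i + 2)) (χ (i + 1))

/-- A polynomial is stable w.r.t. the chain if its values `ρ_i f` are eventually constant. -/
def MacLaneChain.Stable (ch : MacLaneChain K Λ) (f : K[X]) : Prop :=
  ∃ i0 : ℕ, ∀ i : ℕ, i0 ≤ i → ch.ρ i f = ch.ρ i0 f

/-- The chain is essential: non-stable polynomials exist and all have degree `> m`. -/
def MacLaneChain.Essential (ch : MacLaneChain K Λ) : Prop :=
  (∃ f : K[X], ¬ ch.Stable f) ∧ ∀ f : K[X], ¬ ch.Stable f → ch.m < f.natDegree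

/-- MLV limit key polynomials of the chain: monic non-stable polynomials of minimal
degree `m_∞`. -/
def MacLaneChain.IsLimKP (ch : MacLaneChain K Λ) (φ : K[X]) : Prop :=
  φ.Monic ∧ ¬ ch.Stable φ ∧ ∀ f : K[X], ¬ ch.Stable f → φ.natDegree ≤ f.natDegree

/-- Convex subgroup of a linearly ordered abelian group. -/
def IsConvexSubgroup (H : AddSubgroup Λ) : Prop :=
  ∀ x y : Λ, 0 < x → x < y → y ∈ H → x ∈ H

/-- The value group of a valuation: the subgroup of `Λ` generated by the finite values. -/
def valueGroup {F : Type*} [Field F] (ρ : F[X] → WithTop Λ) : AddSubgroup Λ :=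
  AddSubgroup.closure {γ : Λ | ∃ f : F[X], ρ f = (γ : WithTop Λ)}

end KeyPolPaper

/-!
Write `f = r + Q q` with `r = f %ₘ Q`. The invariant `ε` of a product is at least that of each
factor (at the sum of the last indices where the bounds defining `ε` of the factors are attained,
the Leibniz rule has a single dominant term), so `ε(Q q) ≥ ε(Q) > ε(f), ε(r)`. If `ν (Q q) ≤ ν r`,
then at an index `k` attaining `ε(Q q)` the term `∂_k (Q q)` would dominate `∂_k r`, hence give
the value of `∂_k f`, and force `ε(f) ≥ ε(Q q)`. So `ν r < ν (Q q)`, i.e. `f ∼_ν r`.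

It remains to invert `r`, of degree `< deg Q`, by induction on its degree. Let `g` be the monic
normalization of `r` and expand `Q = Σ a_s g^s`. If the truncation `ν_g(Q) = min_s ν(a_s g^s)`
were equal to `ν Q`, the bounds `ε(a_s), ε(g) < ε(Q)` would pass to `Q`; so `ν_g(Q) < ν Q`. At the
first index `s₀` attaining `ν_g(Q)` this gives `a_{s₀} ∼_ν -g G`, `G` the quotient of `Q` by
`g^{s₀+1}`. An inverse `e` of `a_{s₀}` (`deg a_{s₀} < deg g`) then gives `(-e G) g ∼_ν 1`, and
reducing `-e G` modulo `Q`, as in the first step, brings its degree below `deg Q`.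
-/

section WithTopNSMul

theorem WithTop.nsmul_top_of_ne_zero {M : Type*} [AddMonoid M] {n : ℕ} (hn : n ≠ 0) :
    n • (⊤ : WithTop M) = ⊤ := by
  obtain ⟨m, rfl⟩ := Nat.exists_eq_succ_of_ne_zero hn
  rw [succ_nsmul, WithTop.add_top]

theorem WithTop.nsmul_ne_top {M : Type*} [AddMonoid M] {a : WithTop M} (ha : a ≠ ⊤) (n : ℕ) :
    n • a ≠ ⊤ := by
  lift a to M using ha
  rw [← WithTop.coe_nsmul]
  exact WithTop.coe_ne_top

variable {Λ : Type*} [AddCommGroup Λ] [LinearOrder Λ] [IsOrderedAddMonoid Λ]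

theorem WithTop.nsmul_lt_nsmul {n : ℕ} (hn : n ≠ 0) {a b : WithTop Λ} (h : a < b) :
    n • a < n • b := by
  lift a to Λ using h.ne_top
  induction b with
  | top => rw [WithTop.nsmul_top_of_ne_zero hn, ← WithTop.coe_nsmul]; exact WithTop.coe_lt_top _
  | coe b =>
    rw [← WithTop.coe_nsmul, ← WithTop.coe_nsmul, WithTop.coe_lt_coe]
    exact nsmul_lt_nsmul_right hn (WithTop.coe_lt_coe.1 h)

theorem WithTop.le_of_add_nsmul_le_add_nsmul {x a b : WithTop Λ} {n : ℕ} (hx : x ≠ ⊤)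
    (hn : n ≠ 0) (h : x + n • a ≤ x + n • b) : a ≤ b :=
  le_of_not_gt fun hba =>
    ((WithTop.add_le_add_iff_left hx).1 h).not_gt (WithTop.nsmul_lt_nsmul hn hba)

end WithTopNSMul

namespace KeyPolPaper

variable {K : Type*} [Field K] {Λ : Type*} [AddCommGroup Λ] [LinearOrder Λ]

namespace IsValuation

variable {ν : K[X] → WithTop Λ} (hν : IsValuation ν)
include hν

theorem map_zero : ν 0 = ⊤ := hν.1

theorem map_mul (f g : K[X]) : ν (f * g) = ν f + ν g := hν.2.1 f g

theorem min_le_map_add (f g : K[X]) : min (ν f) (ν g) ≤ ν (f + g) := hν.2.2.1 f g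

theorem map_C_ne_top {a : K} (ha : a ≠ 0) : ν (C a) ≠ ⊤ := hν.2.2.2 a ha

theorem map_ne_top_of_mul {f g : K[X]} (h : ν (f * g) ≠ ⊤) : ν f ≠ ⊤ ∧ ν g ≠ ⊤ := by
  rwa [hν.map_mul, WithTop.add_ne_top] at h

theorem map_one : ν 1 = 0 := by
  have h1 : ν 1 ≠ ⊤ := by simpa using hν.map_C_ne_top (one_ne_zero (α := K))
  obtain ⟨a, ha⟩ := WithTop.ne_top_iff_exists.1 h1
  have h2 : ((a + a : Λ) : WithTop Λ) = a := by rw [WithTop.coe_add, ha, ← hν.map_mul, mul_one]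
  rw [WithTop.coe_eq_coe, add_eq_left] at h2
  rw [← ha, h2, WithTop.coe_zero]

theorem map_pow (f : K[X]) (n : ℕ) : ν (f ^ n) = n • ν f := by
  induction n with
  | zero => rw [pow_zero, zero_nsmul, hν.map_one]
  | succ n ih => rw [pow_succ, hν.map_mul, ih, succ_nsmul]

theorem le_map_sum {ι : Type*} (t : Finset ι) (h : ι → K[X]) :
    t.inf (fun i => ν (h i)) ≤ ν (∑ i ∈ t, h i) := by
  classical
  induction t using Finset.induction_on with
  | empty => simp [hν.map_zero]
  | insert a t ha ih =>
    rw [Finset.sum_insert ha, Finset.inf_insert]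
    exact (min_le_min le_rfl ih).trans (hν.min_le_map_add _ _)

variable [IsOrderedAddMonoid Λ]

theorem map_neg (f : K[X]) : ν (-f) = ν f := by
  have h1 : ν (C (-1)) ≠ ⊤ := hν.map_C_ne_top (neg_ne_zero.2 one_ne_zero)
  have hsq : ν (C (-1)) + ν (C (-1)) = 0 := by
    rw [← hν.map_mul, ← C_mul, neg_one_mul, neg_neg, C_1, hν.map_one]
  obtain ⟨a, ha⟩ := WithTop.ne_top_iff_exists.1 h1
  have ha0 : a = 0 := by
    rw [← ha, ← WithTop.coe_add, ← WithTop.coe_zero, WithTop.coe_eq_coe] at hsq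
    rcases lt_trichotomy a 0 with h | h | h
    · exact absurd hsq (add_neg h h).ne
    · exact h
    · exact absurd hsq (add_pos h h).ne'
  rw [neg_eq_neg_one_mul, ← C_1, ← C_neg, hν.map_mul, ← ha, ha0, WithTop.coe_zero, zero_add]

theorem map_sub_comm (f g : K[X]) : ν (f - g) = ν (g - f) := by
  rw [← hν.map_neg, neg_sub]

theorem min_le_map_sub (f g : K[X]) : min (ν f) (ν g) ≤ ν (f - g) := by
  simpa only [sub_eq_add_neg, hν.map_neg] using hν.min_le_map_add f (-g)

theorem map_add_eq_left {f g : K[X]} (h : ν f < ν g) : ν (f + g) = ν f := by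
  refine le_antisymm ?_ ((min_eq_left h.le).symm.le.trans (hν.min_le_map_add f g))
  by_contra! hlt
  have := hν.min_le_map_sub (f + g) g
  rw [add_sub_cancel_right] at this
  exact this.not_gt (lt_min hlt h)

theorem map_add_eq_right {f g : K[X]} (h : ν g < ν f) : ν (f + g) = ν g := by
  rw [add_comm]
  exact hν.map_add_eq_left h

theorem le_map_sum_add {ι : Type*} (t : Finset ι) (h : ι → K[X]) {a c : WithTop Λ}
    (hle : ∀ i ∈ t, a ≤ ν (h i) + c) : a ≤ ν (∑ i ∈ t, h i) + c := by
  rcases t.eq_empty_or_nonempty with rfl | ht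
  · simp [hν.map_zero]
  obtain ⟨i, hi, hinf⟩ := Finset.exists_mem_eq_inf t ht fun i => ν (h i)
  exact (hle i hi).trans (add_le_add_left (hinf ▸ hν.le_map_sum t h) c)

theorem map_sum_eq_of_lt {ι : Type*} {t : Finset ι} {h : ι → K[X]} {i₀ : ι} (hi₀ : i₀ ∈ t)
    (hi₀_top : ν (h i₀) ≠ ⊤) (hlt : ∀ i ∈ t, i ≠ i₀ → ν (h i₀) < ν (h i)) :
    ν (∑ i ∈ t, h i) = ν (h i₀) := by
  classical
  rw [← Finset.add_sum_erase t h hi₀]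
  refine hν.map_add_eq_left (lt_of_lt_of_le ?_ (hν.le_map_sum _ _))
  exact (Finset.lt_inf_iff (lt_top_iff_ne_top.2 hi₀_top)).2 fun i hi =>
    hlt i (Finset.mem_of_mem_erase hi) (Finset.ne_of_mem_erase hi)

end IsValuation

section VEquiv

variable {ν : K[X] → WithTop Λ} (hν : IsValuation ν) {f g h : K[X]}
include hν

theorem vEquiv_self (hf : ν f ≠ ⊤) : VEquiv ν f f := by
  rw [VEquiv, sub_self, hν.map_zero]
  exact lt_top_iff_ne_top.2 hf

variable [IsOrderedAddMonoid Λ]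

theorem VEquiv.map_eq (hfg : VEquiv ν f g) : ν g = ν f := by
  rw [show g = f + -(f - g) by ring, hν.map_add_eq_left (by rwa [hν.map_neg])]

theorem VEquiv.symm (hfg : VEquiv ν f g) : VEquiv ν g f := by
  rw [VEquiv, hfg.map_eq hν, hν.map_sub_comm]
  exact hfg

theorem VEquiv.trans (hfg : VEquiv ν f g) (hgh : VEquiv ν g h) : VEquiv ν f h := by
  have hgh' : ν f < ν (g - h) := hfg.map_eq hν ▸ hgh
  rw [VEquiv, show f - h = (f - g) + (g - h) by ring]
  exact (lt_min hfg hgh').trans_le (hν.min_le_map_add _ _)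

theorem VEquiv.mul_left {b : K[X]} (hb : ν b ≠ ⊤) (hfg : VEquiv ν f g) :
    VEquiv ν (b * f) (b * g) := by
  rw [VEquiv, ← mul_sub, hν.map_mul, hν.map_mul]
  exact WithTop.add_lt_add_left hb hfg

theorem VEquiv.mul_right {b : K[X]} (hb : ν b ≠ ⊤) (hfg : VEquiv ν f g) :
    VEquiv ν (f * b) (g * b) := by
  rw [mul_comm f, mul_comm g]
  exact hfg.mul_left hν hb

theorem VEquiv.of_mul_right {b : K[X]} (hb : ν b ≠ ⊤) (hfg : VEquiv ν (f * b) (g * b)) :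
    VEquiv ν f g := by
  rw [VEquiv, ← sub_mul, hν.map_mul, hν.map_mul] at hfg
  exact (WithTop.add_lt_add_iff_right hb).1 hfg

end VEquiv

-- `ε(u) ≤ E`, in a form that is meaningful also for constant `u` (whose `eps` is junk).
def EpsLE (ν : K[X] → WithTop Λ) (u : K[X]) (E : WithTop Λ) : Prop :=
  ∀ k : ℕ, ν u ≤ ν (hasseDeriv k u) + k • E

def IsLastTight (ν : K[X] → WithTop Λ) (u : K[X]) (E : WithTop Λ) (b : ℕ) : Prop :=
  ν u = ν (hasseDeriv b u) + b • E ∧ ∀ i, b < i → ν u < ν (hasseDeriv i u) + i • E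

namespace EpsLE

variable {ν : K[X] → WithTop Λ} {u v : K[X]} {E M : WithTop Λ}

theorem of_forall_pos (h : ∀ k, 1 ≤ k → ν u ≤ ν (hasseDeriv k u) + k • E) : EpsLE ν u E := by
  intro k
  rcases Nat.eq_zero_or_pos k with rfl | hk
  · rw [hasseDeriv_zero', zero_nsmul, add_zero]
  · exact h k hk

theorem of_natDegree_eq_zero (hν : IsValuation ν) (hu : u.natDegree = 0) (E : WithTop Λ) :
    EpsLE ν u E :=
  of_forall_pos fun k hk => by
    rw [hasseDeriv_eq_zero_of_lt_natDegree u k (by omega), hν.map_zero, WithTop.top_add]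
    exact le_top

theorem exists_isLastTight (hν : IsValuation ν) (hu : EpsLE ν u E) (hu_top : ν u ≠ ⊤) {a : ℕ}
    (ha : ν u = ν (hasseDeriv a u) + a • E) : ∃ b, a ≤ b ∧ IsLastTight ν u E b := by
  classical
  have htop : ∀ i, u.natDegree < i → ν (hasseDeriv i u) + i • E = ⊤ := fun i hi => by
    rw [hasseDeriv_eq_zero_of_lt_natDegree u i hi, hν.map_zero, WithTop.top_add]
  have ha_le : a ≤ u.natDegree := by
    by_contra! h
    exact hu_top (ha.trans (htop a h))
  let P : ℕ → Prop := fun l => ν u = ν (hasseDeriv l u) + l • E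
  refine ⟨Nat.findGreatest P u.natDegree, Nat.le_findGreatest (P := P) ha_le ha,
    Nat.findGreatest_spec (P := P) ha_le ha, fun i hi => (hu i).lt_of_ne fun h => ?_⟩
  rcases le_or_gt i u.natDegree with hiu | hiu
  · exact Nat.findGreatest_is_greatest hi hiu h
  · exact hu_top (h.trans (htop i hiu))

variable [IsOrderedAddMonoid Λ]

theorem mono (hu : EpsLE ν u E) (hEM : E ≤ M) : EpsLE ν u M := fun k =>
  (hu k).trans (by gcongr)

theorem neg (hν : IsValuation ν) (hu : EpsLE ν u E) : EpsLE ν (-u) E := fun k => by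
  rw [hν.map_neg, map_neg, hν.map_neg]
  exact hu k

theorem mul (hν : IsValuation ν) (hu : EpsLE ν u E) (hv : EpsLE ν v E) : EpsLE ν (u * v) E :=
  fun k => by
    rw [hasseDeriv_mul, hν.map_mul]
    refine hν.le_map_sum_add _ _ fun ij hij => ?_
    rw [Finset.HasAntidiagonal.mem_antidiagonal] at hij
    rw [hν.map_mul, ← hij, add_nsmul, add_add_add_comm]
    exact add_le_add (hu _) (hv _)

theorem pow (hν : IsValuation ν) (hu : EpsLE ν u E) (n : ℕ) : EpsLE ν (u ^ n) E := by
  induction n with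
  | zero => exact of_natDegree_eq_zero hν (by simp) E
  | succ n ih => rw [pow_succ]; exact ih.mul hν hu

theorem sum (hν : IsValuation ν) {ι : Type*} {t : Finset ι} {h : ι → K[X]}
    (ht : ∀ i ∈ t, EpsLE ν (h i) E) (hle : ∀ i ∈ t, ν (∑ i ∈ t, h i) ≤ ν (h i)) :
    EpsLE ν (∑ i ∈ t, h i) E := fun k => by
  rw [map_sum]
  exact hν.le_map_sum_add _ _ fun i hi => (hle i hi).trans (ht i hi k)

theorem lt_add_nsmul (hu : EpsLE ν u E) (hu_top : ν u ≠ ⊤) (hEM : E < M) {k : ℕ} (hk : k ≠ 0) :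
    ν u < ν (hasseDeriv k u) + k • M := by
  by_cases h : ν (hasseDeriv k u) = ⊤
  · rw [h, WithTop.top_add]
    exact lt_top_iff_ne_top.2 hu_top
  · exact (hu k).trans_lt (WithTop.add_lt_add_left h (WithTop.nsmul_lt_nsmul hk hEM))

end EpsLE

theorem IsLastTight.mul [IsOrderedAddMonoid Λ] {ν : K[X] → WithTop Λ} (hν : IsValuation ν)
    {u v : K[X]} {E : WithTop Λ} {b c : ℕ} (hu : EpsLE ν u E) (hv : EpsLE ν v E) (hE : E ≠ ⊤)
    (huv : ν (u * v) ≠ ⊤) (hb : IsLastTight ν u E b) (hc : IsLastTight ν v E c) :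
    ν (u * v) = ν (hasseDeriv (b + c) (u * v)) + (b + c) • E := by
  obtain ⟨hu_top, hv_top⟩ := hν.map_ne_top_of_mul huv
  have hbc : ν (hasseDeriv b u * hasseDeriv c v) + (b + c) • E = ν (u * v) := by
    rw [hν.map_mul, hν.map_mul, add_nsmul, add_add_add_comm, ← hb.1, ← hc.1]
  have hbc_top : ν (hasseDeriv b u * hasseDeriv c v) ≠ ⊤ := fun h =>
    huv (by rw [← hbc, h, WithTop.top_add])
  have hlt : ∀ ij ∈ Finset.HasAntidiagonal.antidiagonal (b + c), ij ≠ (b, c) →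
      ν (hasseDeriv b u * hasseDeriv c v) < ν (hasseDeriv ij.1 u * hasseDeriv ij.2 v) := by
    rintro ⟨i, j⟩ hij hne
    rw [Finset.HasAntidiagonal.mem_antidiagonal] at hij
    refine (WithTop.add_lt_add_iff_right (WithTop.nsmul_ne_top hE (b + c))).1 ?_
    rw [hbc, hν.map_mul, hν.map_mul, ← hij, add_nsmul, add_add_add_comm]
    rcases lt_or_ge b i with hi | hi
    · exact WithTop.add_lt_add_of_lt_of_le hv_top (hb.2 i hi) (hv j)
    · have hj : c < j := by
        by_contra! hj
        exact hne (Prod.ext (by dsimp; omega) (by dsimp; omega))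
      exact WithTop.add_lt_add_of_le_of_lt hu_top (hu i) (hc.2 j hj)
  rw [hasseDeriv_mul, hν.map_sum_eq_of_lt (i₀ := (b, c)) (by simp) hbc_top hlt, hbc]

section Eps

variable {ν : K[X] → WithTop Λ}

theorem isEps_eps {f : K[X]} (h : ∃ e, IsEps ν f e) : IsEps ν f (eps ν f) := by
  unfold eps
  rw [dif_pos h]
  exact h.choose_spec

theorem eps_eq_top_of_map_eq_top {f : K[X]} (hf : ν f = ⊤) : eps ν f = ⊤ := by
  unfold eps
  split_ifs with h
  · rcases h.choose_spec with ⟨-, he⟩ | ⟨hf', -⟩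
    · exact he
    · exact absurd hf hf'
  · rfl

theorem map_ne_top_of_eps_lt {f : K[X]} {E : WithTop Λ} (h : eps ν f < E) : ν f ≠ ⊤ :=
  fun hf => (eps_eq_top_of_map_eq_top hf ▸ h).ne_top rfl

variable [IsOrderedAddMonoid Λ] [Module ℚ Λ] (hν : IsValuation ν) {f : K[X]}
  (hf : 0 < f.natDegree) (hf_top : ν f ≠ ⊤)
include hν hf hf_top

-- `ε(f)` is the largest of the slopes `(ν f - ν (∂_b f)) / b` over the `b ≥ 1` with
-- `ν (∂_b f) ≠ ⊤`; there is at least one, `b = deg f`.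
theorem exists_isEps : ∃ e, IsEps ν f e := by
  classical
  obtain ⟨a, ha⟩ := WithTop.ne_top_iff_exists.1 hf_top
  let B := (Finset.range (f.natDegree + 1)).filter fun b => 1 ≤ b ∧ ν (hasseDeriv b f) ≠ ⊤
  have hB : B.Nonempty := by
    refine ⟨f.natDegree, Finset.mem_filter.2 ⟨Finset.self_mem_range_succ _, hf, ?_⟩⟩
    rw [hasseDeriv_natDegree_eq_C]
    exact hν.map_C_ne_top (leadingCoeff_ne_zero.2 (ne_zero_of_natDegree_gt hf))
  let slope : ℕ → Λ := fun b => (b : ℚ)⁻¹ • (a - (ν (hasseDeriv b f)).untopD 0)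
  have hslope : ∀ b ∈ B, ν (hasseDeriv b f) + b • (slope b : WithTop Λ) = ν f := by
    intro b hb
    obtain ⟨-, hb1, hb_top⟩ := Finset.mem_filter.1 hb
    obtain ⟨w, hw⟩ := WithTop.ne_top_iff_exists.1 hb_top
    have : b • slope b = a - w := by
      simp only [slope, ← hw, WithTop.untopD_coe]
      rw [← Nat.cast_smul_eq_nsmul ℚ, smul_smul, mul_inv_cancel₀ (by positivity), one_smul]
    rw [← WithTop.coe_nsmul, this, ← hw, ← WithTop.coe_add, add_sub_cancel, ha]
  refine ⟨(B.sup' hB slope : Λ), Or.inr ⟨hf_top, fun b hb => ?_, ?_⟩⟩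
  · by_cases hbB : b ∈ B
    · rw [← hslope b hbB]
      gcongr
      exact WithTop.coe_le_coe.2 (Finset.le_sup' slope hbB)
    · have : ν (hasseDeriv b f) = ⊤ := by
        by_contra h
        refine hbB (Finset.mem_filter.2 ⟨Finset.mem_range.2 ?_, hb, h⟩)
        by_contra! hbd
        exact h (by rw [hasseDeriv_eq_zero_of_lt_natDegree f b (by omega), hν.map_zero])
      rw [this, WithTop.top_add]
      exact le_top
  · obtain ⟨b, hbB, hb⟩ := Finset.exists_mem_eq_sup' hB slope
    exact ⟨b, (Finset.mem_filter.1 hbB).2.1, by rw [hb, hslope b hbB]⟩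

theorem epsLE_eps : EpsLE ν f (eps ν f) := by
  rcases isEps_eps (exists_isEps hν hf hf_top) with ⟨h, -⟩ | ⟨-, h, -⟩
  · exact absurd h hf_top
  · exact EpsLE.of_forall_pos h

theorem exists_eps_tight : ∃ k, 1 ≤ k ∧ ν f = ν (hasseDeriv k f) + k • eps ν f := by
  rcases isEps_eps (exists_isEps hν hf hf_top) with ⟨h, -⟩ | ⟨-, -, h⟩
  · exact absurd h hf_top
  · exact h

theorem eps_ne_top : eps ν f ≠ ⊤ := by
  obtain ⟨k, hk, h⟩ := exists_eps_tight hν hf hf_top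
  intro htop
  rw [htop, WithTop.nsmul_top_of_ne_zero (by omega), WithTop.add_top] at h
  exact hf_top h

theorem eps_le_of_epsLE {E : WithTop Λ} (h : EpsLE ν f E) : eps ν f ≤ E := by
  obtain ⟨k, hk, hkf⟩ := exists_eps_tight hν hf hf_top
  have hk_top : ν (hasseDeriv k f) ≠ ⊤ := fun h => hf_top (by rw [hkf, h, WithTop.top_add])
  exact WithTop.le_of_add_nsmul_le_add_nsmul hk_top (by omega) (hkf ▸ h k)

theorem le_eps_of_tight {E : WithTop Λ} {k : ℕ} (hk : 1 ≤ k)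
    (h : ν f = ν (hasseDeriv k f) + k • E) : E ≤ eps ν f := by
  have hk_top : ν (hasseDeriv k f) ≠ ⊤ := fun h' => hf_top (by rw [h, h', WithTop.top_add])
  exact WithTop.le_of_add_nsmul_le_add_nsmul hk_top (by omega) (h ▸ epsLE_eps hν hf hf_top k)

end Eps

section EpsMul

variable [IsOrderedAddMonoid Λ] [Module ℚ Λ] {ν : K[X] → WithTop Λ} (hν : IsValuation ν)
  {u v : K[X]}
include hν

theorem le_eps_mul_of_epsLE (hu : 0 < u.natDegree) (huv : ν (u * v) ≠ ⊤)
    (hv : EpsLE ν v (eps ν u)) : eps ν u ≤ eps ν (u * v) := by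
  obtain ⟨hu_top, hv_top⟩ := hν.map_ne_top_of_mul huv
  have hv0 : v ≠ 0 := by
    rintro rfl
    exact hv_top hν.map_zero
  obtain ⟨a, ha, hau⟩ := exists_eps_tight hν hu hu_top
  have hu_eps := epsLE_eps hν hu hu_top
  obtain ⟨b, hab, hb⟩ := hu_eps.exists_isLastTight hν hu_top hau
  obtain ⟨c, -, hc⟩ := hv.exists_isLastTight hν hv_top (a := 0)
    (by rw [hasseDeriv_zero', zero_nsmul, add_zero])
  have huv_deg : 0 < (u * v).natDegree := by
    rw [natDegree_mul (ne_zero_of_natDegree_gt hu) hv0]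
    omega
  exact le_eps_of_tight hν huv_deg huv (k := b + c) (by omega)
    (hb.mul hν hu_eps hv (eps_ne_top hν hu hu_top) huv hc)

theorem le_eps_mul (hu : 0 < u.natDegree) (huv : ν (u * v) ≠ ⊤) : eps ν u ≤ eps ν (u * v) := by
  by_cases hv : EpsLE ν v (eps ν u)
  · exact le_eps_mul_of_epsLE hν hu huv hv
  obtain ⟨hu_top, hv_top⟩ := hν.map_ne_top_of_mul huv
  have hv_deg : 0 < v.natDegree :=
    Nat.pos_of_ne_zero fun h => hv (EpsLE.of_natDegree_eq_zero hν h _)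
  have hlt : eps ν u < eps ν v :=
    lt_of_not_ge fun h => hv ((epsLE_eps hν hv_deg hv_top).mono h)
  rw [mul_comm] at huv ⊢
  exact hlt.le.trans
    (le_eps_mul_of_epsLE hν hv_deg huv ((epsLE_eps hν hu hu_top).mono hlt.le))

end EpsMul

theorem natDegree_modByMonic_lt_of_pos {g : K[X]} (hg : g.Monic) (hg0 : 0 < g.natDegree)
    (f : K[X]) : (f %ₘ g).natDegree < g.natDegree :=
  natDegree_modByMonic_lt f hg fun h => by simp [h] at hg0

theorem map_ne_top_of_natDegree_lt {ν : K[X] → WithTop Λ} (hν : IsValuation ν) {Q : K[X]}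
    (hQ : IsKeyPoly ν Q) {u : K[X]} (hu : u ≠ 0) (huQ : u.natDegree < Q.natDegree) :
    ν u ≠ ⊤ := by
  rcases Nat.eq_zero_or_pos u.natDegree with h0 | h0
  · rw [eq_C_of_natDegree_eq_zero h0] at hu ⊢
    exact hν.map_C_ne_top (by simpa using hu)
  · exact map_ne_top_of_eps_lt (hQ.2.2 u h0 huQ)

section KeyPoly

variable [IsOrderedAddMonoid Λ] [Module ℚ Λ] {ν : K[X] → WithTop Λ} (hν : IsValuation ν)
  {Q : K[X]} (hQ : IsKeyPoly ν Q)
include hν hQ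

theorem exists_epsLE_lt {E₀ : WithTop Λ} (hE₀ : E₀ < eps ν Q) {u : K[X]}
    (huQ : u.natDegree < Q.natDegree) : ∃ E < eps ν Q, EpsLE ν u E := by
  rcases Nat.eq_zero_or_pos u.natDegree with h0 | h0
  · exact ⟨E₀, hE₀, EpsLE.of_natDegree_eq_zero hν h0 E₀⟩
  · have hu_top := map_ne_top_of_natDegree_lt hν hQ (ne_zero_of_natDegree_gt h0) huQ
    exact ⟨eps ν u, hQ.2.2 u h0 huQ, epsLE_eps hν h0 hu_top⟩

theorem exists_epsLE_lt_of_forall_mem {E₀ : WithTop Λ} (hE₀ : E₀ < eps ν Q) {ι : Type*}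
    (t : Finset ι) {h : ι → K[X]} (ht : ∀ i ∈ t, (h i).natDegree < Q.natDegree) :
    ∃ E < eps ν Q, ∀ i ∈ t, EpsLE ν (h i) E := by
  classical
  induction t using Finset.induction_on with
  | empty => exact ⟨E₀, hE₀, by simp⟩
  | insert a t ha ih =>
    obtain ⟨E₁, hE₁, ha⟩ := exists_epsLE_lt hν hQ hE₀ (ht a (Finset.mem_insert_self a t))
    obtain ⟨E₂, hE₂, ht'⟩ := ih fun i hi => ht i (Finset.mem_insert_of_mem hi)
    refine ⟨max E₁ E₂, max_lt hE₁ hE₂, fun i hi => ?_⟩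
    rcases Finset.mem_insert.1 hi with rfl | hi
    · exact ha.mono (le_max_left _ _)
    · exact (ht' i hi).mono (le_max_right _ _)

theorem vEquiv_modByMonic {x : K[X]} {E : WithTop Λ} (hx : ν x ≠ ⊤) (hE : EpsLE ν x E)
    (hEQ : E < eps ν Q) : VEquiv ν x (x %ₘ Q) := by
  set r := x %ₘ Q
  set q := x /ₘ Q
  have hx_eq : r + Q * q = x := modByMonic_add_div x Q
  have hrQ : r.natDegree < Q.natDegree := natDegree_modByMonic_lt_of_pos hQ.1 hQ.2.1 x
  suffices hlt : ν r < ν (Q * q) by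
    have hxr : ν x = ν r := by rw [← hx_eq]; exact hν.map_add_eq_left hlt
    rwa [VEquiv, hxr, ← hx_eq, add_sub_cancel_left]
  by_contra! hle
  have hQq_le : ν (Q * q) ≤ ν x := by
    rw [← hx_eq]
    exact (le_min hle le_rfl).trans (hν.min_le_map_add _ _)
  have hQq_top : ν (Q * q) ≠ ⊤ := ne_top_of_le_ne_top hx hQq_le
  have hq0 : q ≠ 0 := by
    rintro h
    rw [h, mul_zero, hν.map_zero] at hQq_top
    exact hQq_top rfl
  have hQq_deg : 0 < (Q * q).natDegree := by
    rw [natDegree_mul hQ.1.ne_zero hq0]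
    exact Nat.add_pos_left hQ.2.1 _
  set M := eps ν (Q * q)
  have hQM : eps ν Q ≤ M := le_eps_mul hν hQ.2.1 hQq_top
  obtain ⟨k, hk, hkM⟩ := exists_eps_tight hν hQq_deg hQq_top
  have hr : ν (Q * q) < ν (hasseDeriv k r) + k • M := by
    rcases eq_or_ne r 0 with hr0 | hr0
    · rw [hr0, map_zero, hν.map_zero, WithTop.top_add]
      exact lt_top_iff_ne_top.2 hQq_top
    · obtain ⟨E', hE'Q, hE'⟩ := exists_epsLE_lt hν hQ hEQ hrQ
      exact hle.trans_lt (hE'.lt_add_nsmul (map_ne_top_of_natDegree_lt hν hQ hr0 hrQ)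
        (hE'Q.trans_le hQM) (by omega))
  have hderiv : ν (hasseDeriv k x) = ν (hasseDeriv k (Q * q)) := by
    rw [← hx_eq, map_add, hν.map_add_eq_right]
    rw [hkM] at hr
    exact (WithTop.add_lt_add_iff_right
      (WithTop.nsmul_ne_top (eps_ne_top hν hQq_deg hQq_top) k)).1 hr
  have hx_lt := hE.lt_add_nsmul hx (hEQ.trans_le hQM) (by omega : k ≠ 0)
  rw [hderiv, ← hkM] at hx_lt
  exact hx_lt.not_ge hQq_le

end KeyPoly

section Expansion

variable {g : K[X]}

noncomputable def qQuot (g f : K[X]) (n : ℕ) : K[X] := (· /ₘ g)^[n] f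

theorem qQuot_succ (f : K[X]) (n : ℕ) : qQuot g f (n + 1) = qQuot g f n /ₘ g :=
  Function.iterate_succ_apply' _ n f

theorem qCoeff_eq_qQuot_modByMonic (f : K[X]) (s : ℕ) : qCoeff g f s = qQuot g f s %ₘ g := rfl

theorem natDegree_qQuot (hg : g.Monic) (f : K[X]) (n : ℕ) :
    (qQuot g f n).natDegree = f.natDegree - n * g.natDegree := by
  induction n with
  | zero => simp [qQuot]
  | succ n ih =>
    rw [qQuot_succ, natDegree_divByMonic _ hg, ih, Nat.succ_mul, Nat.sub_sub]

theorem qQuot_eq_zero (hg : g.Monic) (hg0 : 0 < g.natDegree) (f : K[X]) {n : ℕ}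
    (hn : f.natDegree < n) : qQuot g f n = 0 := by
  induction n, hn using Nat.le_induction with
  | base =>
    rw [qQuot_succ, divByMonic_eq_zero_iff hg]
    refine degree_lt_degree ?_
    rw [natDegree_qQuot hg, Nat.sub_eq_zero_of_le (Nat.le_mul_of_pos_right _ hg0)]
    exact hg0
  | succ n _ ih => rw [qQuot_succ, ih, zero_divByMonic]

theorem eq_sum_qCoeff_add_qQuot (f : K[X]) (n : ℕ) :
    f = ∑ s ∈ Finset.range n, qCoeff g f s * g ^ s + g ^ n * qQuot g f n := by
  induction n with
  | zero => simp [qQuot]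
  | succ n ih =>
    have hdiv := modByMonic_add_div (qQuot g f n) g
    rw [Finset.sum_range_succ, qCoeff_eq_qQuot_modByMonic, qQuot_succ]
    linear_combination ih - g ^ n * hdiv

theorem sum_qCoeff_mul_pow (hg : g.Monic) (hg0 : 0 < g.natDegree) (f : K[X]) :
    ∑ s ∈ Finset.range (f.natDegree + 1), qCoeff g f s * g ^ s = f := by
  have h := eq_sum_qCoeff_add_qQuot (g := g) f (f.natDegree + 1)
  rw [qQuot_eq_zero hg hg0 f (Nat.lt_succ_self _), mul_zero, add_zero] at h
  exact h.symm

variable {ν : K[X] → WithTop Λ} (hν : IsValuation ν)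
include hν

theorem trunc_le_map_qCoeff_mul_pow (hg : g.Monic) (hg0 : 0 < g.natDegree) (f : K[X]) (s : ℕ) :
    trunc ν g f ≤ ν (qCoeff g f s * g ^ s) := by
  rcases le_or_gt s f.natDegree with hs | hs
  · exact Finset.inf_le (Finset.mem_range.2 (Nat.lt_succ_of_le hs))
  · rw [qCoeff_eq_qQuot_modByMonic, qQuot_eq_zero hg hg0 f hs, zero_modByMonic, zero_mul,
      hν.map_zero]
    exact le_top

theorem trunc_le (hg : g.Monic) (hg0 : 0 < g.natDegree) (f : K[X]) : trunc ν g f ≤ ν f :=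
  calc trunc ν g f ≤ ν (∑ s ∈ Finset.range (f.natDegree + 1), qCoeff g f s * g ^ s) :=
        hν.le_map_sum _ _
    _ = ν f := by rw [sum_qCoeff_mul_pow hg hg0 f]

theorem qCoeff_vEquiv_neg_mul_qQuot [IsOrderedAddMonoid Λ] (hg : g.Monic) (hg0 : 0 < g.natDegree)
    (hg_top : ν g ≠ ⊤) {f : K[X]} (htrunc : trunc ν g f < ν f) {s₀ : ℕ}
    (hs₀ : s₀ ∈ attain ν g f) (hmin : ∀ s < s₀, s ∉ attain ν g f) :
    VEquiv ν (qCoeff g f s₀) (-(g * qQuot g f (s₀ + 1))) := by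
  have hlow : trunc ν g f < ν (∑ s ∈ Finset.range s₀, qCoeff g f s * g ^ s) := by
    refine lt_of_lt_of_le ?_ (hν.le_map_sum _ _)
    refine (Finset.lt_inf_iff (lt_top_iff_ne_top.2 htrunc.ne_top)).2 fun s hs => ?_
    exact (trunc_le_map_qCoeff_mul_pow hν hg hg0 f s).lt_of_ne
      fun h => hmin s (Finset.mem_range.1 hs) h.symm
  have hsplit : qCoeff g f s₀ * g ^ s₀ - -(g * qQuot g f (s₀ + 1)) * g ^ s₀ =
      f - ∑ s ∈ Finset.range s₀, qCoeff g f s * g ^ s := by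
    have h := eq_sum_qCoeff_add_qQuot (g := g) f (s₀ + 1)
    rw [Finset.sum_range_succ] at h
    linear_combination -h
  have hequiv : VEquiv ν (qCoeff g f s₀ * g ^ s₀) (-(g * qQuot g f (s₀ + 1)) * g ^ s₀) := by
    rw [VEquiv, hsplit, hs₀]
    exact (lt_min htrunc hlow).trans_le (hν.min_le_map_sub _ _)
  exact hequiv.of_mul_right hν (by rw [hν.map_pow]; exact WithTop.nsmul_ne_top hg_top s₀)

end Expansion

theorem trunc_ne_top {ν : K[X] → WithTop Λ} (hν : IsValuation ν) {Q : K[X]} (hQ : IsKeyPoly ν Q)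
    {g : K[X]} (hg : g.Monic) (hg0 : 0 < g.natDegree) (hgQ : g.natDegree < Q.natDegree)
    {f : K[X]} (hf : f ≠ 0) : trunc ν g f ≠ ⊤ := by
  have hg_top := map_ne_top_of_natDegree_lt hν hQ hg.ne_zero hgQ
  obtain ⟨s, -, hs⟩ : ∃ s ∈ Finset.range (f.natDegree + 1), qCoeff g f s * g ^ s ≠ 0 := by
    by_contra! h
    exact hf (by rw [← sum_qCoeff_mul_pow hg hg0 f]; exact Finset.sum_eq_zero h)
  have hc_top := map_ne_top_of_natDegree_lt hν hQ (left_ne_zero_of_mul hs)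
    ((natDegree_modByMonic_lt_of_pos hg hg0 _).trans hgQ)
  refine ne_top_of_le_ne_top ?_ (trunc_le_map_qCoeff_mul_pow hν hg hg0 f s)
  rw [hν.map_mul, hν.map_pow]
  exact WithTop.add_ne_top.2 ⟨hc_top, WithTop.nsmul_ne_top hg_top s⟩

section Units

variable [IsOrderedAddMonoid Λ] [Module ℚ Λ] {ν : K[X] → WithTop Λ} (hν : IsValuation ν)
  {Q : K[X]} (hQ : IsKeyPoly ν Q) {g : K[X]} (hg : g.Monic) (hg0 : 0 < g.natDegree)
  (hgQ : g.natDegree < Q.natDegree)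
include hν hQ hg hg0 hgQ

theorem trunc_lt_of_isKeyPoly : trunc ν g Q < ν Q := by
  refine (trunc_le hν hg hg0 Q).lt_of_ne fun h => ?_
  have hQ_top : ν Q ≠ ⊤ := h ▸ trunc_ne_top hν hQ hg hg0 hgQ hQ.1.ne_zero
  have hg_top := map_ne_top_of_natDegree_lt hν hQ hg.ne_zero hgQ
  have hgQ_eps : eps ν g < eps ν Q := hQ.2.2 g hg0 hgQ
  obtain ⟨E, hEQ, hE⟩ := exists_epsLE_lt_of_forall_mem hν hQ hgQ_eps
    (Finset.range (Q.natDegree + 1)) (h := qCoeff g Q)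
    fun s _ => (natDegree_modByMonic_lt_of_pos hg hg0 _).trans hgQ
  have hterm : ∀ s ∈ Finset.range (Q.natDegree + 1),
      EpsLE ν (qCoeff g Q s * g ^ s) (max E (eps ν g)) := fun s hs =>
    ((hE s hs).mono (le_max_left _ _)).mul hν
      (((epsLE_eps hν hg0 hg_top).mono (le_max_right _ _)).pow hν s)
  have hQE : EpsLE ν Q (max E (eps ν g)) := by
    have hsum := EpsLE.sum hν hterm fun s _ => by
      rw [sum_qCoeff_mul_pow hg hg0 Q, ← h]
      exact trunc_le_map_qCoeff_mul_pow hν hg hg0 Q s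
    rwa [sum_qCoeff_mul_pow hg hg0 Q] at hsum
  exact (eps_le_of_epsLE hν hQ.2.1 hQ_top hQE).not_gt (max_lt hEQ hgQ_eps)

theorem exists_mul_monic_vEquiv_one
    (ih : ∀ c : K[X], c ≠ 0 → c.natDegree < g.natDegree →
      ∃ e, e.natDegree < Q.natDegree ∧ VEquiv ν (e * c) 1) :
    ∃ b, b.natDegree < Q.natDegree ∧ VEquiv ν (b * g) 1 := by
  classical
  have hg_top := map_ne_top_of_natDegree_lt hν hQ hg.ne_zero hgQ
  have htrunc := trunc_lt_of_isKeyPoly hν hQ hg hg0 hgQ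
  have hattain : ∃ s, s ∈ attain ν g Q := by
    obtain ⟨s, -, hs⟩ := Finset.exists_mem_eq_inf (Finset.range (Q.natDegree + 1))
      Finset.nonempty_range_add_one fun s => ν (qCoeff g Q s * g ^ s)
    exact ⟨s, hs.symm⟩
  set s₀ := Nat.find hattain
  set c := qCoeff g Q s₀
  set G := qQuot g Q (s₀ + 1)
  have hcG : VEquiv ν c (-(g * G)) := qCoeff_vEquiv_neg_mul_qQuot hν hg hg0 hg_top htrunc
    (Nat.find_spec hattain) fun s hs => Nat.find_min hattain hs
  have hc0 : c ≠ 0 := fun h => hcG.ne_top (by rw [h, hν.map_zero])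
  obtain ⟨e, he, hec⟩ := ih c hc0 (natDegree_modByMonic_lt_of_pos hg hg0 _)
  have he_top := (hν.map_ne_top_of_mul hec.ne_top).1
  have hb₁ : VEquiv ν (-(e * G) * g) 1 := by
    have h := hcG.mul_left hν he_top
    rw [show e * -(g * G) = -(e * G) * g by ring] at h
    exact (h.symm hν).trans hν hec
  have hG : G.natDegree < Q.natDegree := by
    rw [natDegree_qQuot hg]
    exact Nat.sub_lt hQ.2.1 (Nat.mul_pos (Nat.succ_pos _) hg0)
  obtain ⟨E₁, hE₁, he_eps⟩ := exists_epsLE_lt hν hQ (hQ.2.2 g hg0 hgQ) he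
  obtain ⟨E₂, hE₂, hG_eps⟩ := exists_epsLE_lt hν hQ (hQ.2.2 g hg0 hgQ) hG
  have hb₁_eps : EpsLE ν (-(e * G)) (max E₁ E₂) :=
    ((he_eps.mono (le_max_left _ _)).mul hν (hG_eps.mono (le_max_right _ _))).neg hν
  have hmod := vEquiv_modByMonic hν hQ (hν.map_ne_top_of_mul hb₁.ne_top).1 hb₁_eps
    (max_lt hE₁ hE₂)
  exact ⟨_, natDegree_modByMonic_lt_of_pos hQ.1 hQ.2.1 _,
    ((hmod.symm hν).mul_right hν hg_top).trans hν hb₁⟩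

end Units

theorem exists_mul_vEquiv_one [IsOrderedAddMonoid Λ] [Module ℚ Λ] {ν : K[X] → WithTop Λ}
    (hν : IsValuation ν) {Q : K[X]} (hQ : IsKeyPoly ν Q) {r : K[X]} (hr : r ≠ 0)
    (hrQ : r.natDegree < Q.natDegree) :
    ∃ b, b.natDegree < Q.natDegree ∧ VEquiv ν (b * r) 1 := by
  induction hn : r.natDegree using Nat.strong_induction_on generalizing r with
  | _ n ih =>
    rcases Nat.eq_zero_or_pos n with h0 | hpos
    · obtain ⟨a, rfl⟩ : ∃ a, r = C a := ⟨_, eq_C_of_natDegree_eq_zero (hn.trans h0)⟩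
      have ha : a ≠ 0 := fun h => hr (by rw [h, C_0])
      refine ⟨C a⁻¹, by simpa using hQ.2.1, ?_⟩
      rw [← C_mul, inv_mul_cancel₀ ha, C_1]
      exact vEquiv_self hν (by rw [hν.map_one]; exact WithTop.zero_ne_top)
    · have hlc : r.leadingCoeff⁻¹ ≠ 0 := inv_ne_zero (leadingCoeff_ne_zero.2 hr)
      have hg_deg : (r * C r.leadingCoeff⁻¹).natDegree = n := by
        rw [natDegree_mul_C hlc, hn]
      obtain ⟨b, hb, hbg⟩ := exists_mul_monic_vEquiv_one hν hQ (monic_mul_leadingCoeff_inv hr)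
        (hg_deg ▸ hpos) (hg_deg ▸ hn ▸ hrQ)
        fun c hc hcg => ih _ (hg_deg ▸ hcg) hc ((hg_deg ▸ hcg).trans (hn ▸ hrQ)) rfl
      refine ⟨b * C r.leadingCoeff⁻¹, by rwa [natDegree_mul_C hlc], ?_⟩
      rwa [mul_assoc, mul_comm (C _)]

variable [IsOrderedAddMonoid Λ]

variable [Module ℚ Λ]

/-- if `Q` is a key polynomial for `ν` and `ε(f) < ε(Q)`, then the initial
term of `f` is a unit: there is `b` with `deg b < deg Q` and `b f ∼_ν 1`. -/
theorem stmt3 (ν : K[X] → WithTop Λ) (hν : IsValuation ν)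
    (Q : K[X]) (hQ : IsKeyPoly ν Q)
    (f : K[X]) (hf : 0 < f.natDegree) (hef : eps ν f < eps ν Q) :
    ∃ b : K[X], b.natDegree < Q.natDegree ∧ VEquiv ν (b * f) 1 := by
  have hf_top : ν f ≠ ⊤ := map_ne_top_of_eps_lt hef
  have hfr : VEquiv ν f (f %ₘ Q) :=
    vEquiv_modByMonic hν hQ hf_top (epsLE_eps hν hf hf_top) hef
  have hr0 : f %ₘ Q ≠ 0 := fun h => (hfr.symm hν).ne_top (by rw [h, hν.map_zero])
  obtain ⟨b, hb, hbr⟩ :=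
    exists_mul_vEquiv_one hν hQ hr0 (natDegree_modByMonic_lt_of_pos hQ.1 hQ.2.1 f)
  exact ⟨b, hb, (hfr.mul_left hν (hν.map_ne_top_of_mul hbr.ne_top).1).trans hν hbr⟩

end KeyPolPaper
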